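/- arXiv:1506.06784 — 4 statements merged into one kernel-verified Lean document; each statement's English description precedes it below -/
import Mathlib

section
/- Let γ, σ_R > 0, z, f̄ ∈ ℝ, and set σ = (γ⁻¹ + σ_R⁻¹)⁻¹, K_h = σ_R/(σ_R + γ), K_R = γ/(σ_R + γ). Then K_h + K_R = 1 and σ·(z/γ + f̄/σ_R) = K_h·z + K_R·f̄. That is, the probabilistic shared control MAP is exactly a linear blend of the operator input z and autonomy mode f̄ with arbitration weights summing to one. -/
theorem inv_add_inv_inv_mul_div_add_div {K : Type*} [Field K] {a b : K}
    (ha : a ≠ 0) (hb : b ≠ 0) (hab : b + a ≠ 0) (x y : K) :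
    (a⁻¹ + b⁻¹)⁻¹ * (x / a + y / b) = b / (b + a) * x + a / (b + a) * y := by
  field_simp

/-- The probabilistic shared control MAP `σ·(z/γ + f̄/σ_R)` with `σ = (γ⁻¹ + σ_R⁻¹)⁻¹`
is exactly a linear blend `K_h·z + K_R·f̄` with arbitration weights
`K_h = σ_R/(σ_R + γ)`, `K_R = γ/(σ_R + γ)` summing to one. -/
theorem psc_map_is_linear_blend (γ σR z fbar : ℝ) (hγ : 0 < γ) (hσ : 0 < σR) :
    σR / (σR + γ) + γ / (σR + γ) = 1 ∧
      (γ⁻¹ + σR⁻¹)⁻¹ * (z / γ + fbar / σR) =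
        (σR / (σR + γ)) * z + (γ / (σR + γ)) * fbar := by
  have hsum : σR + γ ≠ 0 := by positivity
  refine ⟨?_, inv_add_inv_inv_mul_div_add_div hγ.ne' hσ.ne' hsum z fbar⟩
  rw [← add_div, div_self hsum]
end

section
/- (Every linear blend is a probabilistic shared control MAP.) Let K_R ∈ (0,1), K_h = 1 − K_R, γ > 0, and set σ_R = γ/K_R − γ. Then σ_R > 0, and for all z, f̄ ∈ ℝ, σ·(z/γ + f̄/σ_R) = K_h·z + K_R·f̄, where σ = (γ⁻¹ + σ_R⁻¹)⁻¹. -/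
/-! The MAP estimate of the Gaussian posterior is the precision-weighted mean of `z` and `f̄`,
with weights `σ_R / (γ + σ_R)` and `γ / (γ + σ_R)`. The choice `σ_R = γ / K_R - γ` makes
`γ + σ_R = γ / K_R`, so these weights are exactly `1 - K_R` and `K_R`. -/

theorem inv_add_inv_inv_mul_add_div {K : Type*} [Field K] {γ s : K} (hγ : γ ≠ 0) (hs : s ≠ 0) (hγs : γ + s ≠ 0)
    (z f : K) :
    (γ⁻¹ + s⁻¹)⁻¹ * (z / γ + f / s) = s / (γ + s) * z + γ / (γ + s) * f := by
  have hσ : (γ⁻¹ + s⁻¹)⁻¹ = γ * s / (γ + s) := by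
    rw [inv_add_inv hγ hs, inv_div]
  rw [hσ]
  field_simp

/-- Every linear blend is a probabilistic shared control MAP: for `K_R ∈ (0,1)`,
`K_h = 1 − K_R`, `γ > 0`, `σ_R = γ/K_R − γ`, one has `σ_R > 0` and
`σ·(z/γ + f̄/σ_R) = K_h·z + K_R·f̄` where `σ = (γ⁻¹ + σ_R⁻¹)⁻¹`. -/
theorem linear_blend_is_psc_map (KR γ : ℝ) (hKR : KR ∈ Set.Ioo (0 : ℝ) 1) (hγ : 0 < γ) :
    0 < γ / KR - γ ∧
      ∀ z fbar : ℝ,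
        (γ⁻¹ + (γ / KR - γ)⁻¹)⁻¹ * (z / γ + fbar / (γ / KR - γ)) =
          (1 - KR) * z + KR * fbar := by
  obtain ⟨hKR₀, hKR₁⟩ := hKR
  have hσR : 0 < γ / KR - γ := sub_pos.mpr ((lt_div_iff₀ hKR₀).mpr (by nlinarith))
  have hsum : γ + (γ / KR - γ) = γ / KR := add_sub_cancel γ _
  refine ⟨hσR, fun z fbar => ?_⟩
  rw [inv_add_inv_inv_mul_add_div hγ.ne' hσR.ne' (add_pos hγ hσR).ne', hsum]
  field_simp
end

section
/- (Theorem 3, suboptimality of linear blending for multimodal autonomy, quantitative form.) Let γ, s > 0, β₁, β₂ > 0, and m₁, m₂ ∈ ℝ with d = m₁ − m₂ ≠ 0. Define g(x) = exp(−(x − m₂)²/(2γ)) · (β₁·exp(−(x − m₁)²/(2s)) + β₂·exp(−(x − m₂)²/(2s))). Then g(m₂) ≥ β₂ and g((m₁ + m₂)/2) = (β₁ + β₂)·exp(−(d²/8)·(1/γ + 1/s)). Consequently, if (β₁ + β₂)·exp(−(d²/8)·(1/γ + 1/s)) < β₂, then the equal-weight linear blend (m₁ + m₂)/2 of the operator trajectory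 h̄ = m₂ and the autonomy mode m₁ satisfies g((m₁ + m₂)/2) < g(m₂), i.e., the linear blend is strictly suboptimal for the shared-control posterior g. -/
/-! At the operator's trajectory `m₂` the agreeability factor and the second mode both equal `1`.
The midpoint lies at distance `d/2` from both `m₁` and `m₂`, so all three Gaussian factors of `g`
are evaluated at the same squared distance `d²/4` and the mixture weights factor out. -/

/-- Shared-control posterior for a two-mode Gaussian-mixture autonomy distribution with
operator trajectory at `m₂` and agreeability parameter `γ`. -/
noncomputable def sharedPosterior (γ s β₁ β₂ m₁ m₂ x : ℝ) : ℝ :=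
  Real.exp (-(x - m₂) ^ 2 / (2 * γ)) *
    (β₁ * Real.exp (-(x - m₁) ^ 2 / (2 * s)) + β₂ * Real.exp (-(x - m₂) ^ 2 / (2 * s)))

open Real

theorem sharedPosterior_self (γ s β₁ β₂ m₁ m₂ : ℝ) :
    sharedPosterior γ s β₁ β₂ m₁ m₂ m₂ = β₁ * exp (-(m₂ - m₁) ^ 2 / (2 * s)) + β₂ := by
  simp [sharedPosterior]

theorem le_sharedPosterior_self (γ s β₁ β₂ m₁ m₂ : ℝ) (hβ₁ : 0 ≤ β₁) :
    β₂ ≤ sharedPosterior γ s β₁ β₂ m₁ m₂ m₂ := by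
  rw [sharedPosterior_self]
  have := mul_nonneg hβ₁ (exp_pos (-(m₂ - m₁) ^ 2 / (2 * s))).le
  linarith

theorem neg_sq_midpoint_sub_div (a b σ : ℝ) :
    -((a + b) / 2 - b) ^ 2 / (2 * σ) = -((a - b) ^ 2 / 8) * (1 / σ) ∧
      -((a + b) / 2 - a) ^ 2 / (2 * σ) = -((a - b) ^ 2 / 8) * (1 / σ) :=
  ⟨by ring, by ring⟩

theorem sharedPosterior_midpoint (γ s β₁ β₂ m₁ m₂ : ℝ) :
    sharedPosterior γ s β₁ β₂ m₁ m₂ ((m₁ + m₂) / 2) =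
      (β₁ + β₂) * exp (-((m₁ - m₂) ^ 2 / 8) * (1 / γ + 1 / s)) := by
  obtain ⟨hγ, -⟩ := neg_sq_midpoint_sub_div m₁ m₂ γ
  obtain ⟨hs₂, hs₁⟩ := neg_sq_midpoint_sub_div m₁ m₂ s
  rw [sharedPosterior, hγ, hs₁, hs₂, mul_add (-((m₁ - m₂) ^ 2 / 8)), exp_add]
  ring

theorem ltb_suboptimal_quantitative_general (γ s β₁ β₂ m₁ m₂ : ℝ)
    (hβ₁ : 0 < β₁) :
    sharedPosterior γ s β₁ β₂ m₁ m₂ m₂ ≥ β₂ ∧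
      sharedPosterior γ s β₁ β₂ m₁ m₂ ((m₁ + m₂) / 2) =
        (β₁ + β₂) * Real.exp (-(((m₁ - m₂) ^ 2) / 8) * (1 / γ + 1 / s)) ∧
      ((β₁ + β₂) * Real.exp (-(((m₁ - m₂) ^ 2) / 8) * (1 / γ + 1 / s)) < β₂ →
        sharedPosterior γ s β₁ β₂ m₁ m₂ ((m₁ + m₂) / 2) <
          sharedPosterior γ s β₁ β₂ m₁ m₂ m₂) := by
  have hself := le_sharedPosterior_self γ s β₁ β₂ m₁ m₂ hβ₁.le
  have hmid := sharedPosterior_midpoint γ s β₁ β₂ m₁ m₂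
  exact ⟨hself, hmid, fun hlt => hmid ▸ hlt.trans_le hself⟩

/-- Suboptimality of linear blending for multimodal autonomy, quantitative form:
`g(m₂) ≥ β₂`, `g((m₁+m₂)/2) = (β₁+β₂)·exp(−(d²/8)·(1/γ + 1/s))` with `d = m₁ − m₂`, and
hence if `(β₁+β₂)·exp(−(d²/8)·(1/γ + 1/s)) < β₂` then the equal-weight linear blend
`(m₁+m₂)/2` is strictly suboptimal: `g((m₁+m₂)/2) < g(m₂)`. -/
theorem ltb_suboptimal_quantitative (γ s β₁ β₂ m₁ m₂ : ℝ)
    (hγ : 0 < γ) (hs : 0 < s) (hβ₁ : 0 < β₁) (hβ₂ : 0 < β₂)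
    (hd : m₁ - m₂ ≠ 0) :
    sharedPosterior γ s β₁ β₂ m₁ m₂ m₂ ≥ β₂ ∧
      sharedPosterior γ s β₁ β₂ m₁ m₂ ((m₁ + m₂) / 2) =
        (β₁ + β₂) * Real.exp (-(((m₁ - m₂) ^ 2) / 8) * (1 / γ + 1 / s)) ∧
      ((β₁ + β₂) * Real.exp (-(((m₁ - m₂) ^ 2) / 8) * (1 / γ + 1 / s)) < β₂ →
        sharedPosterior γ s β₁ β₂ m₁ m₂ ((m₁ + m₂) / 2) <
          sharedPosterior γ s β₁ β₂ m₁ m₂ m₂) :=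
  ltb_suboptimal_quantitative_general γ s β₁ β₂ m₁ m₂ hβ₁
end

section
/- Let γ, Σ_h, Σ_f > 0 and μ_h, μ_f ∈ ℝ, and let (h*, f*) be the unique solution of the system (h* − f*)/γ + (h* − μ_h)/Σ_h = 0 and (f* − h*)/γ + (f* − μ_f)/Σ_f = 0. Then both h* and f* lie in the interval [min(μ_h, μ_f), max(μ_h, μ_f)]. That is, the jointly optimal operator and autonomy trajectories are each a compromise between the operator's mean trajectory and the autonomy's mean trajectory. -/
/-!
If `h* > max(μ_h, μ_f)`, the first equation forces `f* > h*`, and then both terms of the second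
equation are positive, which is absurd. Negating all variables gives the lower bound, and the
system is symmetric under exchanging `(h, μ_h, Σ_h)` with `(f, μ_f, Σ_f)`.
-/

section Stationary

variable {K : Type*} [Field K] [LinearOrder K] [IsStrictOrderedRing K]
  {γ Sa Sb ma mb a b : K}

theorem le_max_of_stationary (hγ : 0 < γ) (hSa : 0 < Sa) (hSb : 0 < Sb)
    (ha : (a - b) / γ + (a - ma) / Sa = 0) (hb : (b - a) / γ + (b - mb) / Sb = 0) :
    a ≤ max ma mb := by
  by_contra! hlt
  have hma : 0 < (a - ma) / Sa := div_pos (by linarith [le_max_left ma mb]) hSa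
  have hab : a < b := by
    by_contra! hba
    linarith [div_nonneg (sub_nonneg.2 hba) hγ.le]
  have hba : 0 < (b - a) / γ := div_pos (by linarith) hγ
  have hmb : 0 < (b - mb) / Sb := div_pos (by linarith [le_max_right ma mb]) hSb
  linarith

theorem min_le_of_stationary (hγ : 0 < γ) (hSa : 0 < Sa) (hSb : 0 < Sb)
    (ha : (a - b) / γ + (a - ma) / Sa = 0) (hb : (b - a) / γ + (b - mb) / Sb = 0) :
    min ma mb ≤ a := by
  have hneg : -a ≤ max (-ma) (-mb) := by
    refine le_max_of_stationary (b := -b) hγ hSa hSb ?_ ?_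
    · rw [show (-a - -b) / γ + (-a - -ma) / Sa = -((a - b) / γ + (a - ma) / Sa) by ring, ha,
        neg_zero]
    · rw [show (-b - -a) / γ + (-b - -mb) / Sb = -((b - a) / γ + (b - mb) / Sb) by ring, hb,
        neg_zero]
  rwa [max_neg_neg, neg_le_neg_iff] at hneg

theorem mem_Icc_of_stationary (hγ : 0 < γ) (hSa : 0 < Sa) (hSb : 0 < Sb)
    (ha : (a - b) / γ + (a - ma) / Sa = 0) (hb : (b - a) / γ + (b - mb) / Sb = 0) :
    a ∈ Set.Icc (min ma mb) (max ma mb) :=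
  ⟨min_le_of_stationary hγ hSa hSb ha hb, le_max_of_stationary hγ hSa hSb ha hb⟩

end Stationary

/-- The jointly optimal operator and autonomy trajectories are each a compromise between
the operator's mean and the autonomy's mean: any solution of the stationarity system
lies in `[min(μ_h, μ_f), max(μ_h, μ_f)]` in both coordinates. -/
theorem joint_maximizer_between_means (γ Sh Sf μh μf hstar fstar : ℝ)
    (hγ : 0 < γ) (hSh : 0 < Sh) (hSf : 0 < Sf)
    (h1 : (hstar - fstar) / γ + (hstar - μh) / Sh = 0)
    (h2 : (fstar - hstar) / γ + (fstar - μf) / Sf = 0) :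
    hstar ∈ Set.Icc (min μh μf) (max μh μf) ∧
      fstar ∈ Set.Icc (min μh μf) (max μh μf) := by
  refine ⟨mem_Icc_of_stationary hγ hSh hSf h1 h2, ?_⟩
  rw [min_comm, max_comm]
  exact mem_Icc_of_stationary hγ hSf hSh h2 h1
end
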